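/- arXiv:2004.07270 — 3 statements merged into one kernel-verified Lean document; each statement's English description precedes it below -/
import Mathlib

section
/- Suppose there exists a symmetric P ∈ ℝ^{n×n} such that the dissipation matrix satisfies K(P) ⪯ 0 (negative semidefinite). Then the system is (Q,S,R)-dissipative; in fact the quadratic function V(x) = xᵀPx is a storage function, i.e. for all integers 0 ≤ k₂ < k₁ and every trajectory (u,x,y) of the system, V(x_{k₁}) − V(x_{k₂}) ≤ Σ_{i=k₂}^{k₁−1} s(u_i, y_i). -/
/-! The quadratic form of `K(P)` at `(xₖ, uₖ)` equals `V(xₖ₊₁) - V(xₖ) - s(uₖ, yₖ)` for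
`V(x) = xᵀPx`, so `K(P) ⪯ 0` is exactly the one-step dissipation inequality, and summing it
along a trajectory telescopes to the dissipation inequality over `[k₂, k₁)`. -/

open Matrix

/-- `M ⪯ 0`: a real matrix is negative semidefinite iff `-M` is positive semidefinite. -/
def Matrix.NegSemidef {k : Type*} [Fintype k] (M : Matrix k k ℝ) : Prop :=
  (-M).PosSemidef

/-- Quadratic supply rate `s(u,y) = uᵀRu + uᵀSᵀy + yᵀSu + yᵀQy`. -/
noncomputable def supplyRate {m p : ℕ} (R : Matrix (Fin m) (Fin m) ℝ)
    (S : Matrix (Fin p) (Fin m) ℝ) (Q : Matrix (Fin p) (Fin p) ℝ)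
    (u : Fin m → ℝ) (y : Fin p → ℝ) : ℝ :=
  u ⬝ᵥ R.mulVec u + u ⬝ᵥ Sᵀ.mulVec y + y ⬝ᵥ S.mulVec u + y ⬝ᵥ Q.mulVec y

/-- The dissipation matrix `K(P)`. -/
noncomputable def dissipationMatrix {n m p : ℕ}
    (A : Matrix (Fin n) (Fin n) ℝ) (B : Matrix (Fin n) (Fin m) ℝ)
    (C : Matrix (Fin p) (Fin n) ℝ) (D : Matrix (Fin p) (Fin m) ℝ)
    (R : Matrix (Fin m) (Fin m) ℝ) (S : Matrix (Fin p) (Fin m) ℝ)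
    (Q : Matrix (Fin p) (Fin p) ℝ)
    (P : Matrix (Fin n) (Fin n) ℝ) : Matrix (Fin n ⊕ Fin m) (Fin n ⊕ Fin m) ℝ :=
  Matrix.fromBlocks
    (Aᵀ * P * A - P - Cᵀ * Q * C)
    (Aᵀ * P * B - (Cᵀ * S + Cᵀ * Q * D))
    (Aᵀ * P * B - (Cᵀ * S + Cᵀ * Q * D))ᵀ
    (Bᵀ * P * B - (Dᵀ * Q * D + Dᵀ * S + Sᵀ * D + R))

theorem Matrix.NegSemidef.dotProduct_mulVec_nonpos {k : Type*} [Fintype k]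
    {M : Matrix k k ℝ} (hM : M.NegSemidef) (v : k → ℝ) : v ⬝ᵥ M *ᵥ v ≤ 0 := by
  have h := hM.dotProduct_mulVec_nonneg v
  simp only [star_trivial, neg_mulVec, dotProduct_neg] at h
  linarith

theorem sub_le_sum_Ico_of_succ_sub_le {α : Type*} [AddCommGroup α] [PartialOrder α]
    [IsOrderedAddMonoid α] {f g : ℕ → α} (h : ∀ k, f (k + 1) - f k ≤ g k)
    {k₂ k₁ : ℕ} (hk : k₂ ≤ k₁) : f k₁ - f k₂ ≤ ∑ i ∈ Finset.Ico k₂ k₁, g i := by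
  rw [← Finset.sum_Ico_sub f hk]
  exact Finset.sum_le_sum fun i _ => h i

section

variable {n m p : ℕ}
  (A : Matrix (Fin n) (Fin n) ℝ) (B : Matrix (Fin n) (Fin m) ℝ)
  (C : Matrix (Fin p) (Fin n) ℝ) (D : Matrix (Fin p) (Fin m) ℝ)
  (R : Matrix (Fin m) (Fin m) ℝ) (S : Matrix (Fin p) (Fin m) ℝ)
  (Q : Matrix (Fin p) (Fin p) ℝ) (P : Matrix (Fin n) (Fin n) ℝ)

theorem dotProduct_dissipationMatrix_mulVec (hQ : Q.IsSymm) (hP : P.IsSymm)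
    (x : Fin n → ℝ) (u : Fin m → ℝ) :
    Sum.elim x u ⬝ᵥ dissipationMatrix A B C D R S Q P *ᵥ Sum.elim x u =
      (A *ᵥ x + B *ᵥ u) ⬝ᵥ P *ᵥ (A *ᵥ x + B *ᵥ u) - x ⬝ᵥ P *ᵥ x
        - supplyRate R S Q u (C *ᵥ x + D *ᵥ u) := by
  have hP' : Pᵀ = P := hP
  have hQ' : Qᵀ = Q := hQ
  simp only [supplyRate, dissipationMatrix, fromBlocks_mulVec, sumElim_dotProduct_sumElim,
    sub_mulVec, add_mulVec, mulVec_add, dotProduct_add, add_dotProduct, dotProduct_sub,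
    dotProduct_mulVec, transpose_mul, transpose_sub, transpose_transpose,
    hP', hQ', ← mulVec_transpose, mulVec_mulVec, Matrix.mul_assoc,
    Sum.elim_comp_inl, Sum.elim_comp_inr]
  ring

theorem succ_storage_sub_le_supplyRate (hQ : Q.IsSymm) (hP : P.IsSymm)
    (hK : (dissipationMatrix A B C D R S Q P).NegSemidef) (x : Fin n → ℝ) (u : Fin m → ℝ) :
    (A *ᵥ x + B *ᵥ u) ⬝ᵥ P *ᵥ (A *ᵥ x + B *ᵥ u) - x ⬝ᵥ P *ᵥ x
      ≤ supplyRate R S Q u (C *ᵥ x + D *ᵥ u) := by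
  have h := hK.dotProduct_mulVec_nonpos (Sum.elim x u)
  rw [dotProduct_dissipationMatrix_mulVec A B C D R S Q P hQ hP] at h
  linarith

end

theorem lmi_implies_dissipative_with_quadratic_storage_general {n m p : ℕ}
    (A : Matrix (Fin n) (Fin n) ℝ) (B : Matrix (Fin n) (Fin m) ℝ)
    (C : Matrix (Fin p) (Fin n) ℝ) (D : Matrix (Fin p) (Fin m) ℝ)
    (R : Matrix (Fin m) (Fin m) ℝ) (S : Matrix (Fin p) (Fin m) ℝ)
    (Q : Matrix (Fin p) (Fin p) ℝ) (hQ : Q.IsSymm)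
    (P : Matrix (Fin n) (Fin n) ℝ) (hP : P.IsSymm)
    (hK : (dissipationMatrix A B C D R S Q P).NegSemidef) :
    ∀ (u : ℕ → Fin m → ℝ) (x : ℕ → Fin n → ℝ),
      (∀ k : ℕ, x (k + 1) = A.mulVec (x k) + B.mulVec (u k)) →
      ∀ k₂ k₁ : ℕ, k₂ < k₁ →
        (x k₁) ⬝ᵥ P.mulVec (x k₁) - (x k₂) ⬝ᵥ P.mulVec (x k₂)
          ≤ ∑ i ∈ Finset.Ico k₂ k₁,
              supplyRate R S Q (u i) (C.mulVec (x i) + D.mulVec (u i)) := by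
  intro u x hx k₂ k₁ hk
  refine sub_le_sum_Ico_of_succ_sub_le (f := fun k => x k ⬝ᵥ P *ᵥ x k) (fun k => ?_) hk.le
  rw [hx k]
  exact succ_storage_sub_le_supplyRate A B C D R S Q P hQ hP hK (x k) (u k)

theorem lmi_implies_dissipative_with_quadratic_storage {n m p : ℕ}
    (A : Matrix (Fin n) (Fin n) ℝ) (B : Matrix (Fin n) (Fin m) ℝ)
    (C : Matrix (Fin p) (Fin n) ℝ) (D : Matrix (Fin p) (Fin m) ℝ)
    (R : Matrix (Fin m) (Fin m) ℝ) (S : Matrix (Fin p) (Fin m) ℝ)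
    (Q : Matrix (Fin p) (Fin p) ℝ) (hR : R.IsSymm) (hQ : Q.IsSymm)
    (P : Matrix (Fin n) (Fin n) ℝ) (hP : P.IsSymm)
    (hK : (dissipationMatrix A B C D R S Q P).NegSemidef) :
    ∀ (u : ℕ → Fin m → ℝ) (x : ℕ → Fin n → ℝ),
      (∀ k : ℕ, x (k + 1) = A.mulVec (x k) + B.mulVec (u k)) →
      ∀ k₂ k₁ : ℕ, k₂ < k₁ →
        (x k₁) ⬝ᵥ P.mulVec (x k₁) - (x k₂) ⬝ᵥ P.mulVec (x k₂)
          ≤ ∑ i ∈ Finset.Ico k₂ k₁,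
              supplyRate R S Q (u i) (C.mulVec (x i) + D.mulVec (u i)) :=
  lmi_implies_dissipative_with_quadratic_storage_general A B C D R S Q hQ P hP hK
end

section
/- Suppose the data matrices satisfy the noise-free consistency relation X₊ = AX + BU. Then for every symmetric P ∈ ℝ^{n×n}, the data matrix M(P) satisfies the identity M(P) = [X; U]ᵀ K(P) [X; U], where [X; U] ∈ ℝ^{(n+m)×N} denotes the matrix obtained by stacking X on top of U. -/
open Matrix

/-- The data-dependent matrix `M(P)`. -/
noncomputable def dataMatrixM {n m p N : ℕ}
    (C : Matrix (Fin p) (Fin n) ℝ) (D : Matrix (Fin p) (Fin m) ℝ)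
    (R : Matrix (Fin m) (Fin m) ℝ) (S : Matrix (Fin p) (Fin m) ℝ)
    (Q : Matrix (Fin p) (Fin p) ℝ)
    (X Xp : Matrix (Fin n) (Fin N) ℝ) (U : Matrix (Fin m) (Fin N) ℝ)
    (P : Matrix (Fin n) (Fin n) ℝ) : Matrix (Fin N) (Fin N) ℝ :=
  Xpᵀ * P * Xp - Xᵀ * P * X -
    (Uᵀ * R * U + Uᵀ * Sᵀ * (C * X + D * U) + (C * X + D * U)ᵀ * S * U
      + (C * X + D * U)ᵀ * Q * (C * X + D * U))

theorem dataMatrixM_eq_conjugated_dissipationMatrix {n m p N : ℕ}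
    (A : Matrix (Fin n) (Fin n) ℝ) (B : Matrix (Fin n) (Fin m) ℝ)
    (C : Matrix (Fin p) (Fin n) ℝ) (D : Matrix (Fin p) (Fin m) ℝ)
    (R : Matrix (Fin m) (Fin m) ℝ) (S : Matrix (Fin p) (Fin m) ℝ)
    (Q : Matrix (Fin p) (Fin p) ℝ) (hR : R.IsSymm) (hQ : Q.IsSymm)
    (X Xp : Matrix (Fin n) (Fin N) ℝ) (U : Matrix (Fin m) (Fin N) ℝ)
    (hdata : Xp = A * X + B * U) :
    ∀ P : Matrix (Fin n) (Fin n) ℝ, P.IsSymm →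
      dataMatrixM C D R S Q X Xp U P
        = (Matrix.fromRows X U)ᵀ * dissipationMatrix A B C D R S Q P
            * Matrix.fromRows X U := by
  intro P hP
  subst hdata
  rw [dissipationMatrix, Matrix.transpose_fromRows, Matrix.mul_assoc, Matrix.fromBlocks_mul_fromRows,
    Matrix.fromCols_mul_fromRows]
  simp only [dataMatrixM, Matrix.transpose_add, Matrix.transpose_mul, hP.eq, hR.eq, hQ.eq,
    Matrix.transpose_sub, Matrix.transpose_transpose, Matrix.add_mul, Matrix.mul_add,
    Matrix.sub_mul, Matrix.mul_sub, Matrix.mul_assoc]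
  abel
end

section
/- Suppose the pair (A,B) is controllable, the data matrices satisfy the noise-free consistency relation X₊ = AX + BU, and the system is (Q,S,R)-dissipative. Then there exists a symmetric matrix P ∈ ℝ^{n×n} such that M(P) ⪯ 0 (negative semidefinite). (Equivalently: if no symmetric P with M(P) ⪯ 0 exists, then the controllable system generating the data is not (Q,S,R)-dissipative.) -/
/-!
Following Willems, consider the required supply `W z`: the infimum of the supply needed to steer
the origin to `z`. Controllability makes it finite, and since every cycle through the origin
absorbs a nonnegative supply it is bounded below by minus the supply of a continuous return
input. Superposing and rescaling inputs shows that `W` satisfies the parallelogram law, and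
being squeezed between continuous functions it is locally bounded, so it is a quadratic form
`z ⬝ᵥ P *ᵥ z`. Extending trajectories by one step gives the dissipation inequality
`W (A x + B u) ≤ W x + s(u, C x + D u)`; evaluated at `x = X z`, `u = U z`, where
`X₊ z = A X z + B U z`, it says exactly `z ⬝ᵥ M(P) *ᵥ z ≤ 0`.
-/

open Matrix

/-- The controllability matrix `[B, AB, …, A^{n−1}B]`, with columns indexed by
`Fin n × Fin m` (column `(j, k)` is the `k`-th column of `A^j * B`). -/
noncomputable def controllabilityMatrix {n m : ℕ}
    (A : Matrix (Fin n) (Fin n) ℝ) (B : Matrix (Fin n) (Fin m) ℝ) :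
    Matrix (Fin n) (Fin n × Fin m) ℝ :=
  Matrix.of fun i jk => (A ^ (jk.1 : ℕ) * B) i jk.2

open Filter Topology

namespace QuadraticMap

variable {E : Type*} {W : E → ℝ}

theorem polar_add_left_of_parallelogram [AddCommGroup E]
    (hpar : ∀ x y, W (x + y) + W (x - y) = 2 * W x + 2 * W y) (x x' y : E) :
    polar W (x + x') y = polar W x y + polar W x' y := by
  have e₁ : W (x + x' + y) + W (x - x' + y) = 2 * W (x + y) + 2 * W x' := by
    convert hpar (x + y) x' using 3 <;> abel
  have e₂ : W (x - x' + y) + W (x' - x + y) = 2 * W y + 2 * W (x - x') := by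
    convert hpar y (x - x') using 3 <;> abel
  have e₃ : W (x + x' + y) + W (x' - x + y) = 2 * W (x' + y) + 2 * W x := by
    convert hpar (x' + y) x using 3 <;> abel
  have e₄ := hpar x x'
  simp only [polar]
  linarith

-- `polar W · y` is additive and bounded near `0`, hence continuous, hence `ℝ`-linear.
theorem polar_smul_left_of_parallelogram [SeminormedAddCommGroup E] [NormedSpace ℝ E]
    (hpar : ∀ x y, W (x + y) + W (x - y) = 2 * W x + 2 * W y)
    (hbdd : ∀ x₀, ∃ C, ∀ᶠ x in 𝓝 x₀, |W x| ≤ C) (c : ℝ) (x y : E) :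
    polar W (c • x) y = c * polar W x y := by
  let f : E →+ ℝ := AddMonoidHom.mk' (polar W · y) fun x x' =>
    polar_add_left_of_parallelogram hpar x x' y
  obtain ⟨C₀, h₀⟩ := hbdd 0
  obtain ⟨C₁, h₁⟩ := hbdd y
  have hs : {x | |W x| ≤ C₀ ∧ |W (x + y)| ≤ C₁} ∈ 𝓝 (0 : E) :=
    h₀.and (((continuous_add_const y).tendsto' 0 y (zero_add y)).eventually h₁)
  have hf : Continuous f := by
    refine f.continuous_of_isBounded_nhds_zero hs
      (isBounded_iff_forall_norm_le.2 ⟨C₁ + C₀ + |W y|, ?_⟩)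
    rintro _ ⟨x, ⟨hx₀, hx₁⟩, rfl⟩
    rw [Real.norm_eq_abs]
    change |W (x + y) - W x - W y| ≤ _
    rw [abs_le] at *
    constructor <;> linarith [le_abs_self (W y), neg_abs_le (W y)]
  exact map_real_smul f hf c x

theorem exists_bilinForm_of_parallelogram [SeminormedAddCommGroup E] [NormedSpace ℝ E]
    (hpar : ∀ x y, W (x + y) + W (x - y) = 2 * W x + 2 * W y)
    (hbdd : ∀ x₀, ∃ C, ∀ᶠ x in 𝓝 x₀, |W x| ≤ C) :
    ∃ β : LinearMap.BilinForm ℝ E, β.IsSymm ∧ ∀ x, β x x = W x := by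
  have add_left := polar_add_left_of_parallelogram hpar
  have smul_left := polar_smul_left_of_parallelogram hpar hbdd
  refine ⟨(2⁻¹ : ℝ) • LinearMap.mk₂ ℝ (polar W) add_left
    (fun c x y => by rw [smul_left, smul_eq_mul])
    (fun x y y' => by rw [polar_comm, add_left, polar_comm W y, polar_comm W y'])
    (fun c x y => by rw [polar_comm, smul_left, polar_comm, smul_eq_mul]),
    ⟨fun x y => by simp only [LinearMap.smul_apply, LinearMap.mk₂_apply, polar_comm W x y]⟩,
    fun x => ?_⟩
  have h₀ := hpar 0 0
  have h := hpar x x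
  rw [add_zero, sub_zero] at h₀
  rw [sub_self, ← two_smul ℝ x] at h
  simp only [LinearMap.smul_apply, LinearMap.mk₂_apply, polar, ← two_smul ℝ x, smul_eq_mul]
  linarith

end QuadraticMap

theorem Matrix.exists_isSymm_of_parallelogram {ι : Type*} [Fintype ι] [DecidableEq ι]
    {W : (ι → ℝ) → ℝ} (hpar : ∀ x y, W (x + y) + W (x - y) = 2 * W x + 2 * W y)
    (hbdd : ∀ x₀, ∃ C, ∀ᶠ x in 𝓝 x₀, |W x| ≤ C) :
    ∃ P : Matrix ι ι ℝ, P.IsSymm ∧ ∀ x, x ⬝ᵥ P *ᵥ x = W x := by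
  obtain ⟨β, hβ, hβW⟩ := QuadraticMap.exists_bilinForm_of_parallelogram hpar hbdd
  refine ⟨β.toMatrix', LinearMap.BilinForm.isSymm_toMatrix'_iff_isSymm.2 hβ, fun x => ?_⟩
  rw [← Matrix.toBilin'_apply', Matrix.toBilin'_toMatrix', hβW]

section SupplyRate

variable {m p : ℕ} (R : Matrix (Fin m) (Fin m) ℝ) (S : Matrix (Fin p) (Fin m) ℝ)
  (Q : Matrix (Fin p) (Fin p) ℝ)

theorem supplyRate_parallelogram (u u' : Fin m → ℝ) (y y' : Fin p → ℝ) :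
    supplyRate R S Q (u + u') (y + y') + supplyRate R S Q (u - u') (y - y')
      = 2 * supplyRate R S Q u y + 2 * supplyRate R S Q u' y' := by
  simp only [supplyRate, mulVec_add, mulVec_sub, dotProduct_add, dotProduct_sub,
    add_dotProduct, sub_dotProduct]
  ring

theorem supplyRate_smul (c : ℝ) (u : Fin m → ℝ) (y : Fin p → ℝ) :
    supplyRate R S Q (c • u) (c • y) = c ^ 2 * supplyRate R S Q u y := by
  simp only [supplyRate, mulVec_smul, dotProduct_smul, smul_dotProduct, smul_eq_mul]
  ring

theorem continuous_supplyRate {α : Type*} [TopologicalSpace α] {u : α → Fin m → ℝ}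
    {y : α → Fin p → ℝ} (hu : Continuous u) (hy : Continuous y) :
    Continuous fun a => supplyRate R S Q (u a) (y a) := by
  unfold supplyRate
  fun_prop

end SupplyRate

def concatAt {α : Type*} (u : ℕ → α) (T : ℕ) (w : ℕ → α) : ℕ → α :=
  fun k => if k < T then u k else w (k - T)

theorem concatAt_of_lt {α : Type*} (u : ℕ → α) {T k : ℕ} (w : ℕ → α) (hk : k < T) :
    concatAt u T w k = u k :=
  if_pos hk

@[simp]
theorem concatAt_add {α : Type*} (u : ℕ → α) (T : ℕ) (w : ℕ → α) (j : ℕ) :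
    concatAt u T w (T + j) = w j := by
  simp [concatAt]

namespace DiscreteLTI

variable {n m p : ℕ} (A : Matrix (Fin n) (Fin n) ℝ) (B : Matrix (Fin n) (Fin m) ℝ)
  (C : Matrix (Fin p) (Fin n) ℝ) (D : Matrix (Fin p) (Fin m) ℝ)
  (R : Matrix (Fin m) (Fin m) ℝ) (S : Matrix (Fin p) (Fin m) ℝ) (Q : Matrix (Fin p) (Fin p) ℝ)

def trajectory (x : Fin n → ℝ) (u : ℕ → Fin m → ℝ) : ℕ → Fin n → ℝ
  | 0 => x
  | k + 1 => A *ᵥ trajectory x u k + B *ᵥ u k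

noncomputable def supply (x : Fin n → ℝ) (u : ℕ → Fin m → ℝ) (T : ℕ) : ℝ :=
  ∑ i ∈ Finset.range T, supplyRate R S Q (u i) (C *ᵥ trajectory A B x u i + D *ᵥ u i)

section Trajectory

variable (x x' : Fin n → ℝ) (u u' : ℕ → Fin m → ℝ)

@[simp]
theorem trajectory_zero : trajectory A B x u 0 = x := rfl

@[simp]
theorem trajectory_succ (k : ℕ) :
    trajectory A B x u (k + 1) = A *ᵥ trajectory A B x u k + B *ᵥ u k := rfl

theorem trajectory_add (k : ℕ) :
    trajectory A B (x + x') (u + u') k = trajectory A B x u k + trajectory A B x' u' k := by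
  induction k with
  | zero => rfl
  | succ k ih => simp only [trajectory_succ, ih, mulVec_add, Pi.add_apply]; abel

theorem trajectory_sub (k : ℕ) :
    trajectory A B (x - x') (u - u') k = trajectory A B x u k - trajectory A B x' u' k := by
  induction k with
  | zero => rfl
  | succ k ih => simp only [trajectory_succ, ih, mulVec_sub, Pi.sub_apply]; abel

theorem trajectory_smul (c : ℝ) (k : ℕ) :
    trajectory A B (c • x) (c • u) k = c • trajectory A B x u k := by
  induction k with
  | zero => rfl
  | succ k ih => simp only [trajectory_succ, ih, mulVec_smul, Pi.smul_apply, smul_add]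

theorem trajectory_zero_zero (k : ℕ) : trajectory A B 0 0 k = 0 := by
  simpa using trajectory_smul A B 0 0 0 k

theorem trajectory_eq_pow_mulVec_add (k : ℕ) :
    trajectory A B x u k = (A ^ k) *ᵥ x + trajectory A B 0 u k := by
  induction k with
  | zero => simp
  | succ k ih =>
    simp only [trajectory_succ, ih, mulVec_add, mulVec_mulVec, pow_succ']
    abel

theorem trajectory_zero_eq_sum (T : ℕ) :
    trajectory A B 0 u T = ∑ j ∈ Finset.range T, (A ^ j) *ᵥ B *ᵥ u (T - 1 - j) := by
  induction T with
  | zero => simp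
  | succ T ih =>
    rw [Finset.sum_range_succ', trajectory_succ, ih, mulVec_sum]
    simp [pow_succ', ← mulVec_mulVec, Nat.sub_sub, add_comm]

theorem trajectory_congr {u u' : ℕ → Fin m → ℝ} {k : ℕ} (h : ∀ i < k, u i = u' i) :
    trajectory A B x u k = trajectory A B x u' k := by
  induction k with
  | zero => rfl
  | succ k ih =>
    rw [trajectory_succ, trajectory_succ, ih fun i hi => h i (by omega), h k (by omega)]

theorem trajectory_concatAt (w : ℕ → Fin m → ℝ) (T j : ℕ) :
    trajectory A B x (concatAt u T w) (T + j) = trajectory A B (trajectory A B x u T) w j := by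
  induction j with
  | zero => exact trajectory_congr A B x fun i hi => concatAt_of_lt u w hi
  | succ j ih => rw [← add_assoc, trajectory_succ, trajectory_succ, ih, concatAt_add]

theorem trajectory_zero_concatAt_zero (k T : ℕ) :
    trajectory A B 0 (concatAt 0 k u) (k + T) = trajectory A B 0 u T := by
  rw [trajectory_concatAt, trajectory_zero_zero]

end Trajectory

section Supply

variable (x x' : Fin n → ℝ) (u u' : ℕ → Fin m → ℝ)

theorem supply_one :
    supply A B C D R S Q x u 1 = supplyRate R S Q (u 0) (C *ᵥ x + D *ᵥ u 0) := by
  simp [supply]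

theorem supply_parallelogram (T : ℕ) :
    supply A B C D R S Q (x + x') (u + u') T + supply A B C D R S Q (x - x') (u - u') T
      = 2 * supply A B C D R S Q x u T + 2 * supply A B C D R S Q x' u' T := by
  simp only [supply, ← Finset.sum_add_distrib, Finset.mul_sum]
  refine Finset.sum_congr rfl fun i _ => ?_
  rw [trajectory_add, trajectory_sub, Pi.add_apply, Pi.sub_apply, mulVec_add, mulVec_add,
    mulVec_sub, mulVec_sub, add_add_add_comm, sub_add_sub_comm, supplyRate_parallelogram]

theorem supply_smul (c : ℝ) (T : ℕ) :
    supply A B C D R S Q (c • x) (c • u) T = c ^ 2 * supply A B C D R S Q x u T := by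
  simp only [supply, Finset.mul_sum]
  refine Finset.sum_congr rfl fun i _ => ?_
  rw [← supplyRate_smul, trajectory_smul, Pi.smul_apply, mulVec_smul, mulVec_smul, smul_add]

theorem supply_zero_zero (T : ℕ) : supply A B C D R S Q 0 0 T = 0 := by
  simpa using supply_smul A B C D R S Q 0 0 0 T

theorem supply_concatAt (w : ℕ → Fin m → ℝ) (T T' : ℕ) :
    supply A B C D R S Q x (concatAt u T w) (T + T')
      = supply A B C D R S Q x u T + supply A B C D R S Q (trajectory A B x u T) w T' := by
  rw [supply, Finset.sum_range_add]
  congr 1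
  · refine Finset.sum_congr rfl fun i hi => ?_
    have hi := Finset.mem_range.1 hi
    rw [trajectory_congr A B x (u := concatAt u T w) (u' := u)
      fun j hj => concatAt_of_lt u w (hj.trans hi), concatAt_of_lt u w hi]
  · refine Finset.sum_congr rfl fun j _ => ?_
    rw [trajectory_concatAt, concatAt_add]

theorem supply_zero_concatAt_zero (k T : ℕ) :
    supply A B C D R S Q 0 (concatAt 0 k u) (k + T) = supply A B C D R S Q 0 u T := by
  rw [supply_concatAt, trajectory_zero_zero, supply_zero_zero, zero_add]

end Supply

theorem continuous_trajectory {α : Type*} [TopologicalSpace α] {x : α → Fin n → ℝ}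
    {u : α → ℕ → Fin m → ℝ} (hx : Continuous x) (hu : ∀ i, Continuous fun a => u a i) (k : ℕ) :
    Continuous fun a => trajectory A B (x a) (u a) k := by
  induction k with
  | zero => exact hx
  | succ k ih =>
    have := hu k
    simp only [trajectory_succ]
    fun_prop

theorem continuous_supply {α : Type*} [TopologicalSpace α] {x : α → Fin n → ℝ}
    {u : α → ℕ → Fin m → ℝ} (hx : Continuous x) (hu : ∀ i, Continuous fun a => u a i) (T : ℕ) :
    Continuous fun a => supply A B C D R S Q (x a) (u a) T := by
  refine continuous_finsetSum _ fun i _ => continuous_supplyRate R S Q (hu i) ?_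
  have := hu i
  have := continuous_trajectory A B hx hu i
  fun_prop

section Controllability

/-- The coefficient `c (j, ·)` enters at time `n - 1 - j`, so that it has been multiplied by
`A ^ j * B` when the state reaches time `n`. -/
def controllabilityInput (c : Fin n × Fin m → ℝ) : ℕ → Fin m → ℝ :=
  fun i k => if h : i < n then c (Fin.rev ⟨i, h⟩, k) else 0

theorem trajectory_controllabilityInput (c : Fin n × Fin m → ℝ) :
    trajectory A B 0 (controllabilityInput c) n = controllabilityMatrix A B *ᵥ c := by
  have hctrb : controllabilityMatrix A B *ᵥ c
      = ∑ j : Fin n, (A ^ (j : ℕ)) *ᵥ B *ᵥ fun k => c (j, k) := by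
    ext r
    simp [mulVec_mulVec, mulVec, dotProduct, controllabilityMatrix, Fintype.sum_prod_type,
      Finset.sum_apply]
  rw [trajectory_zero_eq_sum,
    Finset.sum_range fun j => A ^ j *ᵥ B *ᵥ controllabilityInput c (n - 1 - j), hctrb]
  refine Fintype.sum_congr _ _ fun j => ?_
  have hj : n - 1 - j < n := by omega
  congr 2
  ext k
  simp only [controllabilityInput, dif_pos hj]
  congr 2
  ext
  simp only [Fin.val_rev]
  omega

theorem continuous_controllabilityInput {α : Type*} [TopologicalSpace α]
    {c : α → Fin n × Fin m → ℝ} (hc : Continuous c) (i : ℕ) :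
    Continuous fun a => controllabilityInput (c a) i := by
  unfold controllabilityInput
  split_ifs <;> fun_prop

theorem exists_continuous_steering (hctrb : (controllabilityMatrix A B).rank = n) :
    ∃ v : (Fin n → ℝ) → ℕ → Fin m → ℝ,
      (∀ i, Continuous fun z => v z i) ∧ ∀ z, trajectory A B 0 (v z) n = z := by
  have hsurj : LinearMap.range (controllabilityMatrix A B).mulVecLin = ⊤ := by
    apply Submodule.eq_top_of_finrank_eq
    rw [← Matrix.rank, hctrb, Module.finrank_fin_fun]
  obtain ⟨g, hg⟩ := (controllabilityMatrix A B).mulVecLin.exists_rightInverse_of_surjective hsurj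
  refine ⟨fun z => controllabilityInput (g z), fun i => ?_, fun z => ?_⟩
  · exact continuous_controllabilityInput g.continuous_of_finiteDimensional i
  · rw [trajectory_controllabilityInput]
    exact LinearMap.congr_fun hg z

end Controllability

def IsDissipative : Prop :=
  ∃ V : (Fin n → ℝ) → ℝ, ∀ (u : ℕ → Fin m → ℝ) (x : ℕ → Fin n → ℝ),
    (∀ k : ℕ, x (k + 1) = A *ᵥ x k + B *ᵥ u k) →
    ∀ k₂ k₁ : ℕ, k₂ < k₁ →
      V (x k₁) - V (x k₂) ≤ ∑ i ∈ Finset.Ico k₂ k₁, supplyRate R S Q (u i) (C *ᵥ x i + D *ᵥ u i)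

variable {A B C D R S Q}

theorem IsDissipative.supply_nonneg_of_cycle (h : IsDissipative A B C D R S Q)
    {u : ℕ → Fin m → ℝ} {T : ℕ} (hu : trajectory A B 0 u T = 0) :
    0 ≤ supply A B C D R S Q 0 u T := by
  obtain ⟨V, hV⟩ := h
  rcases Nat.eq_zero_or_pos T with rfl | hT
  · simp [supply]
  · have h := hV u (trajectory A B 0 u) (fun k => rfl) 0 T hT
    rwa [hu, trajectory_zero, sub_self, ← Finset.range_eq_Ico] at h

variable (A B C D R S Q)

section RequiredSupply

def reachSupplies (z : Fin n → ℝ) : Set ℝ :=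
  {c | ∃ T u, trajectory A B 0 u T = z ∧ supply A B C D R S Q 0 u T = c}

-- Meaningful only when the set is nonempty and bounded below; otherwise `sInf` returns `0`.
noncomputable def requiredSupply (z : Fin n → ℝ) : ℝ :=
  sInf (reachSupplies A B C D R S Q z)

variable {A B C D R S Q} {v : (Fin n → ℝ) → ℕ → Fin m → ℝ}

theorem reachSupplies_nonempty (hv : ∀ z, trajectory A B 0 (v z) n = z) (z : Fin n → ℝ) :
    (reachSupplies A B C D R S Q z).Nonempty :=
  ⟨_, n, v z, hv z, rfl⟩

theorem trajectory_steer_neg_pow (hv : ∀ z, trajectory A B 0 (v z) n = z) (z : Fin n → ℝ) :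
    trajectory A B z (v (-(A ^ n *ᵥ z))) n = 0 := by
  rw [trajectory_eq_pow_mulVec_add, hv, add_neg_cancel]

-- Reaching `z` and then steering back to `0` is a cycle, whose supply is nonnegative.
theorem neg_supply_steer_le (hv : ∀ z, trajectory A B 0 (v z) n = z)
    (hcyc : ∀ u T, trajectory A B 0 u T = 0 → 0 ≤ supply A B C D R S Q 0 u T)
    {z : Fin n → ℝ} {c : ℝ} (hc : c ∈ reachSupplies A B C D R S Q z) :
    -supply A B C D R S Q z (v (-(A ^ n *ᵥ z))) n ≤ c := by
  obtain ⟨T, u, rfl, rfl⟩ := hc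
  have h := hcyc (concatAt u T (v (-(A ^ n *ᵥ trajectory A B 0 u T)))) (T + n)
    (by rw [trajectory_concatAt, trajectory_steer_neg_pow hv])
  rw [supply_concatAt] at h
  linarith

theorem bddBelow_reachSupplies (hv : ∀ z, trajectory A B 0 (v z) n = z)
    (hcyc : ∀ u T, trajectory A B 0 u T = 0 → 0 ≤ supply A B C D R S Q 0 u T) (z : Fin n → ℝ) :
    BddBelow (reachSupplies A B C D R S Q z) :=
  ⟨_, fun _ hc => neg_supply_steer_le hv hcyc hc⟩

theorem requiredSupply_le (hv : ∀ z, trajectory A B 0 (v z) n = z)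
    (hcyc : ∀ u T, trajectory A B 0 u T = 0 → 0 ≤ supply A B C D R S Q 0 u T)
    {u : ℕ → Fin m → ℝ} {T : ℕ} {z : Fin n → ℝ} (hu : trajectory A B 0 u T = z) :
    requiredSupply A B C D R S Q z ≤ supply A B C D R S Q 0 u T :=
  csInf_le (bddBelow_reachSupplies hv hcyc z) ⟨T, u, hu, rfl⟩

theorem le_requiredSupply (hv : ∀ z, trajectory A B 0 (v z) n = z) {z : Fin n → ℝ} {b : ℝ}
    (h : ∀ T u, trajectory A B 0 u T = z → b ≤ supply A B C D R S Q 0 u T) :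
    b ≤ requiredSupply A B C D R S Q z :=
  le_csInf (reachSupplies_nonempty hv z) fun _ ⟨T, u, hu, hc⟩ => hc ▸ h T u hu

theorem requiredSupply_locallyBounded (hv : ∀ z, trajectory A B 0 (v z) n = z)
    (hv_cont : ∀ i, Continuous fun z => v z i)
    (hcyc : ∀ u T, trajectory A B 0 u T = 0 → 0 ≤ supply A B C D R S Q 0 u T)
    (z₀ : Fin n → ℝ) : ∃ M, ∀ᶠ z in 𝓝 z₀, |requiredSupply A B C D R S Q z| ≤ M := by
  set F : (Fin n → ℝ) → ℝ := fun z =>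
    |supply A B C D R S Q 0 (v z) n| + |supply A B C D R S Q z (v (-(A ^ n *ᵥ z))) n|
  have hF : Continuous F := by
    have h₁ := continuous_supply A B C D R S Q (continuous_const (y := 0)) hv_cont n
    have h₂ := continuous_supply A B C D R S Q continuous_id
      (fun i => (hv_cont i).comp (by fun_prop : Continuous fun z : Fin n → ℝ => -(A ^ n *ᵥ z))) n
    exact h₁.abs.add h₂.abs
  have hWF : ∀ z, |requiredSupply A B C D R S Q z| ≤ F z := fun z => by
    have hupper := requiredSupply_le hv hcyc (hv z)
    have hlower : -supply A B C D R S Q z (v (-(A ^ n *ᵥ z))) n ≤ requiredSupply A B C D R S Q z :=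
      le_requiredSupply hv fun T u hu => neg_supply_steer_le hv hcyc ⟨T, u, hu, rfl⟩
    rw [abs_le]
    simp only [F]
    constructor <;> linarith [le_abs_self (supply A B C D R S Q z (v (-(A ^ n *ᵥ z))) n),
      le_abs_self (supply A B C D R S Q 0 (v z) n), abs_nonneg (supply A B C D R S Q 0 (v z) n),
      abs_nonneg (supply A B C D R S Q z (v (-(A ^ n *ᵥ z))) n)]
  exact ⟨F z₀ + 1, ((hF.tendsto z₀).eventually (eventually_lt_nhds (lt_add_one _))).mono
    fun z hz => (hWF z).trans hz.le⟩

theorem requiredSupply_smul_le (hv : ∀ z, trajectory A B 0 (v z) n = z)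
    (hcyc : ∀ u T, trajectory A B 0 u T = 0 → 0 ≤ supply A B C D R S Q 0 u T)
    (t : ℝ) (z : Fin n → ℝ) :
    requiredSupply A B C D R S Q (t • z) ≤ t ^ 2 * requiredSupply A B C D R S Q z := by
  rw [requiredSupply, requiredSupply, ← smul_eq_mul, ← Real.sInf_smul_of_nonneg (sq_nonneg t)]
  refine csInf_le_csInf (bddBelow_reachSupplies hv hcyc _) (reachSupplies_nonempty hv z).smul_set ?_
  rintro _ ⟨_, ⟨T, u, rfl, rfl⟩, rfl⟩
  refine ⟨T, t • u, ?_, ?_⟩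
  · rw [← trajectory_smul, smul_zero]
  · change _ = t ^ 2 • _
    rw [smul_eq_mul, ← supply_smul, smul_zero]

theorem requiredSupply_two_smul (hv : ∀ z, trajectory A B 0 (v z) n = z)
    (hcyc : ∀ u T, trajectory A B 0 u T = 0 → 0 ≤ supply A B C D R S Q 0 u T)
    (z : Fin n → ℝ) :
    requiredSupply A B C D R S Q ((2 : ℝ) • z) = 4 * requiredSupply A B C D R S Q z := by
  have h₁ := requiredSupply_smul_le hv hcyc 2 z
  have h₂ := requiredSupply_smul_le hv hcyc 2⁻¹ ((2 : ℝ) • z)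
  rw [smul_smul, inv_mul_cancel₀ two_ne_zero, one_smul] at h₂
  norm_num at h₁ h₂
  linarith

-- Pad both inputs with leading zeros to the common horizon `T₁ + T₂`, then superpose them.
theorem requiredSupply_add_add_sub_le (hv : ∀ z, trajectory A B 0 (v z) n = z)
    (hcyc : ∀ u T, trajectory A B 0 u T = 0 → 0 ≤ supply A B C D R S Q 0 u T)
    {x y : Fin n → ℝ} {T₁ T₂ : ℕ} {u₁ u₂ : ℕ → Fin m → ℝ} (hu₁ : trajectory A B 0 u₁ T₁ = x)
    (hu₂ : trajectory A B 0 u₂ T₂ = y) :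
    requiredSupply A B C D R S Q (x + y) + requiredSupply A B C D R S Q (x - y)
      ≤ 2 * supply A B C D R S Q 0 u₁ T₁ + 2 * supply A B C D R S Q 0 u₂ T₂ := by
  set w₁ := concatAt 0 T₂ u₁
  set w₂ := concatAt 0 T₁ u₂
  have hw₁ : trajectory A B 0 w₁ (T₁ + T₂) = x := by
    rw [add_comm, trajectory_zero_concatAt_zero, hu₁]
  have hw₂ : trajectory A B 0 w₂ (T₁ + T₂) = y := by
    rw [trajectory_zero_concatAt_zero, hu₂]
  have hadd := requiredSupply_le hv hcyc (u := w₁ + w₂) (T := T₁ + T₂) (z := x + y)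
    (by rw [← hw₁, ← hw₂, ← trajectory_add, add_zero])
  have hsub := requiredSupply_le hv hcyc (u := w₁ - w₂) (T := T₁ + T₂) (z := x - y)
    (by rw [← hw₁, ← hw₂, ← trajectory_sub, sub_zero])
  have hpar := supply_parallelogram A B C D R S Q 0 0 w₁ w₂ (T₁ + T₂)
  rw [add_zero, sub_zero, add_comm T₁ T₂, supply_zero_concatAt_zero, add_comm T₂ T₁,
    supply_zero_concatAt_zero] at hpar
  linarith

theorem requiredSupply_parallelogram_le (hv : ∀ z, trajectory A B 0 (v z) n = z)
    (hcyc : ∀ u T, trajectory A B 0 u T = 0 → 0 ≤ supply A B C D R S Q 0 u T)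
    (x y : Fin n → ℝ) :
    requiredSupply A B C D R S Q (x + y) + requiredSupply A B C D R S Q (x - y)
      ≤ 2 * requiredSupply A B C D R S Q x + 2 * requiredSupply A B C D R S Q y := by
  set W := requiredSupply A B C D R S Q
  have hx : ∀ T₂ u₂, trajectory A B 0 u₂ T₂ = y →
      W (x + y) + W (x - y) ≤ 2 * W x + 2 * supply A B C D R S Q 0 u₂ T₂ := by
    intro T₂ u₂ hu₂
    have : (W (x + y) + W (x - y)) / 2 - supply A B C D R S Q 0 u₂ T₂ ≤ W x :=
      le_requiredSupply hv fun T₁ u₁ hu₁ => by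
        linarith [requiredSupply_add_add_sub_le hv hcyc hu₁ hu₂]
    linarith
  have : (W (x + y) + W (x - y)) / 2 - W x ≤ W y :=
    le_requiredSupply hv fun T₂ u₂ hu₂ => by linarith [hx T₂ u₂ hu₂]
  linarith

theorem requiredSupply_parallelogram (hv : ∀ z, trajectory A B 0 (v z) n = z)
    (hcyc : ∀ u T, trajectory A B 0 u T = 0 → 0 ≤ supply A B C D R S Q 0 u T)
    (x y : Fin n → ℝ) :
    requiredSupply A B C D R S Q (x + y) + requiredSupply A B C D R S Q (x - y)
      = 2 * requiredSupply A B C D R S Q x + 2 * requiredSupply A B C D R S Q y := by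
  have h₁ := requiredSupply_parallelogram_le hv hcyc x y
  have h₂ := requiredSupply_parallelogram_le hv hcyc (x + y) (x - y)
  rw [show x + y + (x - y) = (2 : ℝ) • x by rw [two_smul]; abel,
    show x + y - (x - y) = (2 : ℝ) • y by rw [two_smul]; abel,
    requiredSupply_two_smul hv hcyc, requiredSupply_two_smul hv hcyc] at h₂
  linarith

theorem requiredSupply_step (hv : ∀ z, trajectory A B 0 (v z) n = z)
    (hcyc : ∀ u T, trajectory A B 0 u T = 0 → 0 ≤ supply A B C D R S Q 0 u T)
    (x : Fin n → ℝ) (u₀ : Fin m → ℝ) :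
    requiredSupply A B C D R S Q (A *ᵥ x + B *ᵥ u₀)
      ≤ requiredSupply A B C D R S Q x + supplyRate R S Q u₀ (C *ᵥ x + D *ᵥ u₀) := by
  have : requiredSupply A B C D R S Q (A *ᵥ x + B *ᵥ u₀) - supplyRate R S Q u₀ (C *ᵥ x + D *ᵥ u₀)
      ≤ requiredSupply A B C D R S Q x :=
    le_requiredSupply hv fun T u hu => by
      have h := requiredSupply_le hv hcyc (u := concatAt u T fun _ => u₀) (T := T + 1)
        (z := A *ᵥ x + B *ᵥ u₀) (by rw [trajectory_concatAt, hu]; rfl)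
      rw [supply_concatAt, hu, supply_one] at h
      linarith
  linarith

theorem exists_quadratic_storage (hv : ∀ z, trajectory A B 0 (v z) n = z)
    (hv_cont : ∀ i, Continuous fun z => v z i)
    (hcyc : ∀ u T, trajectory A B 0 u T = 0 → 0 ≤ supply A B C D R S Q 0 u T) :
    ∃ P : Matrix (Fin n) (Fin n) ℝ, P.IsSymm ∧ ∀ x u₀,
      (A *ᵥ x + B *ᵥ u₀) ⬝ᵥ P *ᵥ (A *ᵥ x + B *ᵥ u₀)
        ≤ x ⬝ᵥ P *ᵥ x + supplyRate R S Q u₀ (C *ᵥ x + D *ᵥ u₀) := by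
  obtain ⟨P, hP, hPW⟩ := Matrix.exists_isSymm_of_parallelogram
    (requiredSupply_parallelogram hv hcyc) (requiredSupply_locallyBounded hv hv_cont hcyc)
  exact ⟨P, hP, fun x u₀ => by simpa only [hPW] using requiredSupply_step hv hcyc x u₀⟩

end RequiredSupply

end DiscreteLTI

theorem Matrix.dotProduct_transpose_mul_mul_mulVec {α ι ι' κ κ' : Type*} [CommSemiring α]
    [Fintype ι] [Fintype ι'] [Fintype κ] [Fintype κ'] (E : Matrix κ ι α) (F : Matrix κ κ' α)
    (G : Matrix κ' ι' α) (z : ι → α) (z' : ι' → α) :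
    z ⬝ᵥ (Eᵀ * F * G) *ᵥ z' = (E *ᵥ z) ⬝ᵥ F *ᵥ G *ᵥ z' := by
  rw [Matrix.mul_assoc, ← mulVec_mulVec, dotProduct_mulVec, vecMul_transpose, ← mulVec_mulVec]

section DataMatrix

variable {n m p N : ℕ} {C : Matrix (Fin p) (Fin n) ℝ} {D : Matrix (Fin p) (Fin m) ℝ}
  {R : Matrix (Fin m) (Fin m) ℝ} {S : Matrix (Fin p) (Fin m) ℝ} {Q : Matrix (Fin p) (Fin p) ℝ}
  {P : Matrix (Fin n) (Fin n) ℝ}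

theorem dataMatrixM_isSymm (hR : R.IsSymm) (hQ : Q.IsSymm) (hP : P.IsSymm)
    (X Xp : Matrix (Fin n) (Fin N) ℝ) (U : Matrix (Fin m) (Fin N) ℝ) :
    (dataMatrixM C D R S Q X Xp U P).IsSymm := by
  simp only [Matrix.IsSymm, dataMatrixM, transpose_sub, transpose_add, transpose_mul,
    transpose_transpose, hP.eq, hR.eq, hQ.eq, Matrix.mul_assoc]
  abel

theorem dotProduct_dataMatrixM_mulVec (X Xp : Matrix (Fin n) (Fin N) ℝ)
    (U : Matrix (Fin m) (Fin N) ℝ) (z : Fin N → ℝ) :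
    z ⬝ᵥ dataMatrixM C D R S Q X Xp U P *ᵥ z
      = (Xp *ᵥ z) ⬝ᵥ P *ᵥ Xp *ᵥ z - (X *ᵥ z) ⬝ᵥ P *ᵥ X *ᵥ z
        - supplyRate R S Q (U *ᵥ z) (C *ᵥ X *ᵥ z + D *ᵥ U *ᵥ z) := by
  have hY : (C * X + D * U) *ᵥ z = C *ᵥ X *ᵥ z + D *ᵥ U *ᵥ z := by
    rw [add_mulVec, mulVec_mulVec, mulVec_mulVec]
  simp only [dataMatrixM, sub_mulVec, add_mulVec, dotProduct_sub, dotProduct_add]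
  simp only [dotProduct_transpose_mul_mul_mulVec, hY, supplyRate]

theorem dataMatrixM_negSemidef (A : Matrix (Fin n) (Fin n) ℝ) (B : Matrix (Fin n) (Fin m) ℝ)
    (hR : R.IsSymm) (hQ : Q.IsSymm) (hP : P.IsSymm) {X Xp : Matrix (Fin n) (Fin N) ℝ}
    {U : Matrix (Fin m) (Fin N) ℝ} (hdata : Xp = A * X + B * U)
    (hstep : ∀ x u, (A *ᵥ x + B *ᵥ u) ⬝ᵥ P *ᵥ (A *ᵥ x + B *ᵥ u)
      ≤ x ⬝ᵥ P *ᵥ x + supplyRate R S Q u (C *ᵥ x + D *ᵥ u)) :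
    (dataMatrixM C D R S Q X Xp U P).NegSemidef := by
  refine Matrix.PosSemidef.of_dotProduct_mulVec_nonneg ?_ fun z => ?_
  · rw [IsHermitian, conjTranspose_eq_transpose_of_trivial, transpose_neg,
      (dataMatrixM_isSymm hR hQ hP X Xp U).eq]
  · have hXp : Xp *ᵥ z = A *ᵥ X *ᵥ z + B *ᵥ U *ᵥ z := by
      rw [hdata, add_mulVec, mulVec_mulVec, mulVec_mulVec]
    rw [star_trivial, neg_mulVec, dotProduct_neg, dotProduct_dataMatrixM_mulVec, hXp]
    linarith [hstep (X *ᵥ z) (U *ᵥ z)]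

end DataMatrix

theorem dissipative_implies_dataMatrix_lmi_feasible {n m p N : ℕ}
    (A : Matrix (Fin n) (Fin n) ℝ) (B : Matrix (Fin n) (Fin m) ℝ)
    (C : Matrix (Fin p) (Fin n) ℝ) (D : Matrix (Fin p) (Fin m) ℝ)
    (R : Matrix (Fin m) (Fin m) ℝ) (S : Matrix (Fin p) (Fin m) ℝ)
    (Q : Matrix (Fin p) (Fin p) ℝ) (hR : R.IsSymm) (hQ : Q.IsSymm)
    (X Xp : Matrix (Fin n) (Fin N) ℝ) (U : Matrix (Fin m) (Fin N) ℝ)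
    (hctrb : (controllabilityMatrix A B).rank = n)
    (hdata : Xp = A * X + B * U)
    (hdiss : ∃ V : (Fin n → ℝ) → ℝ,
      ∀ (u : ℕ → Fin m → ℝ) (x : ℕ → Fin n → ℝ),
        (∀ k : ℕ, x (k + 1) = A.mulVec (x k) + B.mulVec (u k)) →
        ∀ k₂ k₁ : ℕ, k₂ < k₁ →
          V (x k₁) - V (x k₂)
            ≤ ∑ i ∈ Finset.Ico k₂ k₁,
                supplyRate R S Q (u i) (C.mulVec (x i) + D.mulVec (u i))) :
    ∃ P : Matrix (Fin n) (Fin n) ℝ, P.IsSymm ∧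
      (dataMatrixM C D R S Q X Xp U P).NegSemidef := by
  obtain ⟨v, hv_cont, hv⟩ := DiscreteLTI.exists_continuous_steering A B hctrb
  obtain ⟨P, hP, hstep⟩ := DiscreteLTI.exists_quadratic_storage hv hv_cont
    fun _ _ hu => DiscreteLTI.IsDissipative.supply_nonneg_of_cycle hdiss hu
  exact ⟨P, hP, dataMatrixM_negSemidef A B hR hQ hP hdata hstep⟩
end
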